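/- arXiv:2502.21052 — 2 statements merged into one kernel-verified Lean document; each statement's English description precedes it below -/
import Mathlib

section
/- Let V₀, V : ℝ × ℂ → M₂(ℂ), and let D : ℝ × ℂ → M₂(ℂ) be differentiable in t with D(t,λ) invertible for all (t,λ) and ∂_t D(t,λ) = V(t,λ)·D(t,λ) − D(t,λ)·V₀(t,λ) for all t ∈ ℝ and λ ∈ ℂ. Let K₀ : ℂ → M₂(ℂ) satisfy V₀(t,λ)·K₀(λ) − K₀(λ)·V₀(t,−λ) = 0 for all t and λ. Then the function K(t,λ) := D(t,λ)·K₀(λ)·D(t,−λ)⁻¹ satisfies ∂_t K(t,λ) = V(t,λ)·K(t,λ) − K(t,λ)·V(t,−λ) for all t ∈ ℝ and λ ∈ ℂ. -/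
open Matrix

noncomputable section

private lemma entry_mul_deriv {A B : ℝ → Matrix (Fin 2) (Fin 2) ℂ}
    {A' B' : Matrix (Fin 2) (Fin 2) ℂ} {t : ℝ}
    (hA : ∀ i j, HasDerivAt (fun s => A s i j) (A' i j) t)
    (hB : ∀ i j, HasDerivAt (fun s => B s i j) (B' i j) t) (i j : Fin 2) :
    HasDerivAt (fun s => (A s * B s) i j) ((A' * B t + A t * B') i j) t := by
  simp only [Matrix.mul_apply, Matrix.add_apply]
  rw [← Finset.sum_add_distrib]
  exact HasDerivAt.fun_sum fun k _ => (hA i k).mul (hB k j)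

private lemma entry_inv_deriv {E : ℝ → Matrix (Fin 2) (Fin 2) ℂ}
    {E' : Matrix (Fin 2) (Fin 2) ℂ} {t : ℝ}
    (hu : ∀ s, IsUnit (E s))
    (hE : ∀ i j, HasDerivAt (fun s => E s i j) (E' i j) t) :
    ∀ i j, HasDerivAt (fun s => (E s)⁻¹ i j)
      ((-((E t)⁻¹ * E' * (E t)⁻¹)) i j) t := by
  have hudet : ∀ s, IsUnit (E s).det := fun s => (Matrix.isUnit_iff_isUnit_det _).mp (hu s)
  have hEd : ∀ i j, DifferentiableAt ℝ (fun s => E s i j) t :=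
    fun i j => (hE i j).differentiableAt
  have hdet : DifferentiableAt ℝ (fun s => (E s).det) t := by
    simp only [Matrix.det_fin_two]
    exact ((hEd 0 0).mul (hEd 1 1)).sub ((hEd 0 1).mul (hEd 1 0))
  have hdetne : (E t).det ≠ 0 := (hudet t).ne_zero
  have key : ∀ (s : ℝ) (i j : Fin 2),
      (E s)⁻¹ i j = ((E s).det)⁻¹ * (E s).adjugate i j := by
    intro s i j
    rw [Matrix.inv_def, Matrix.smul_apply, Ring.inverse_eq_inv', smul_eq_mul]
  have hdiff : ∀ i j, DifferentiableAt ℝ (fun s => (E s)⁻¹ i j) t := by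
    intro i j
    have : (fun s => (E s)⁻¹ i j) = fun s => ((E s).det)⁻¹ * (E s).adjugate i j :=
      funext fun s => key s i j
    rw [this]
    refine (hdet.inv hdetne).mul ?_
    fin_cases i <;> fin_cases j <;>
      simp only [Matrix.adjugate_fin_two, Matrix.cons_val', Matrix.cons_val_zero,
        Matrix.cons_val_one, Matrix.head_cons, Matrix.head_fin_const, Matrix.empty_val',
        Matrix.cons_val_fin_one] <;>
      first
        | exact hEd _ _
        | exact (hEd _ _).neg
  set c : Matrix (Fin 2) (Fin 2) ℂ :=
    Matrix.of fun i j => deriv (fun s => (E s)⁻¹ i j) t with hcdef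
  have hc : ∀ i j, HasDerivAt (fun s => (E s)⁻¹ i j) (c i j) t :=
    fun i j => (hdiff i j).hasDerivAt
  have hprod := entry_mul_deriv hc hE
  have hone : ∀ i j, HasDerivAt (fun s => ((E s)⁻¹ * E s) i j) 0 t := by
    intro i j
    have h1 : (fun s => ((E s)⁻¹ * E s) i j) = fun _ => (1 : Matrix (Fin 2) (Fin 2) ℂ) i j :=
      funext fun s => by rw [Matrix.nonsing_inv_mul _ (hudet s)]
    rw [h1]; exact hasDerivAt_const _ _
  have heq : c * E t + (E t)⁻¹ * E' = 0 := by
    ext i j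
    have := (hprod i j).unique (hone i j)
    simpa using this
  have hc' : c = -((E t)⁻¹ * E' * (E t)⁻¹) := by
    have h1 : c * E t = -((E t)⁻¹ * E') := by
      exact eq_neg_of_add_eq_zero_left heq
    calc c = c * E t * (E t)⁻¹ := by rw [Matrix.mul_nonsing_inv_cancel_right _ _ (hudet t)]
      _ = -((E t)⁻¹ * E') * (E t)⁻¹ := by rw [h1]
      _ = -((E t)⁻¹ * E' * (E t)⁻¹) := by rw [neg_mul]
  intro i j
  rw [← hc']
  exact hc i j

/-- Dressing the boundary in the even-order case: if the Darboux matrix `D` satisfies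
`∂ₜD(t,λ) = V(t,λ)D(t,λ) − D(t,λ)V₀(t,λ)` with each `D(t,λ)` invertible, and the seed
boundary matrix `K₀` satisfies `V₀(t,λ)K₀(λ) − K₀(λ)V₀(t,−λ) = 0`, then the dressed
boundary matrix `K(t,λ) := D(t,λ)K₀(λ)D(t,−λ)⁻¹` satisfies
`∂ₜK(t,λ) = V(t,λ)K(t,λ) − K(t,λ)V(t,−λ)`. -/
theorem dressed_boundary_even
    (V₀ V D : ℝ → ℂ → Matrix (Fin 2) (Fin 2) ℂ)
    (hDinv : ∀ (t : ℝ) (lam : ℂ), IsUnit (D t lam))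
    (hD : ∀ (t : ℝ) (lam : ℂ) (i j : Fin 2),
      HasDerivAt (fun s => D s lam i j)
        ((V t lam * D t lam - D t lam * V₀ t lam) i j) t)
    (K₀ : ℂ → Matrix (Fin 2) (Fin 2) ℂ)
    (hK₀ : ∀ (t : ℝ) (lam : ℂ), V₀ t lam * K₀ lam - K₀ lam * V₀ t (-lam) = 0) :
    ∀ (t : ℝ) (lam : ℂ) (i j : Fin 2),
      HasDerivAt (fun s => (D s lam * K₀ lam * (D s (-lam))⁻¹) i j)
        ((V t lam * (D t lam * K₀ lam * (D t (-lam))⁻¹)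
          - (D t lam * K₀ lam * (D t (-lam))⁻¹) * V t (-lam)) i j) t := by
  intro t lam i j
  set E : ℝ → Matrix (Fin 2) (Fin 2) ℂ := fun s => D s (-lam) with hEdef
  set F : Matrix (Fin 2) (Fin 2) ℂ := (E t)⁻¹ with hFdef
  have hudet : IsUnit (E t).det := (Matrix.isUnit_iff_isUnit_det _).mp (hDinv t (-lam))
  have hEF : E t * F = 1 := Matrix.mul_nonsing_inv _ hudet
  have hFE : F * E t = 1 := Matrix.nonsing_inv_mul _ hudet
  have hK0 : ∀ i j, HasDerivAt (fun _ : ℝ => K₀ lam i j)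
      ((0 : Matrix (Fin 2) (Fin 2) ℂ) i j) t := by
    intro i j; simpa using hasDerivAt_const t (K₀ lam i j)
  have h1 := entry_mul_deriv (hD t lam) hK0
  have hF := entry_inv_deriv (E := E)
    (E' := V t (-lam) * E t - E t * V₀ t (-lam)) (fun s => hDinv s (-lam))
    (hD t (-lam))
  have h2 := entry_mul_deriv h1 hF
  have halg :
      ((V t lam * D t lam - D t lam * V₀ t lam) * K₀ lam + D t lam * 0) * F
        + (D t lam * K₀ lam) * (-(F * (V t (-lam) * E t - E t * V₀ t (-lam)) * F))
      = V t lam * (D t lam * K₀ lam * F)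
        - (D t lam * K₀ lam * F) * V t (-lam) := by
    have h0 : V₀ t lam * K₀ lam = K₀ lam * V₀ t (-lam) := sub_eq_zero.mp (hK₀ t lam)
    have hx : F * (V t (-lam) * E t - E t * V₀ t (-lam)) * F
        = F * V t (-lam) - V₀ t (-lam) * F := by
      rw [Matrix.mul_sub, Matrix.sub_mul]
      congr 1
      · rw [← mul_assoc, mul_assoc (F * V t (-lam)), hEF, mul_one]
      · rw [← mul_assoc, hFE, one_mul]
    rw [hx]
    rw [Matrix.mul_zero, add_zero, Matrix.sub_mul]
    have e1 : D t lam * V₀ t lam * K₀ lam = D t lam * (K₀ lam * V₀ t (-lam)) := by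
      rw [mul_assoc, h0]
    rw [e1]
    noncomm_ring
  have goalfun : (fun s => (D s lam * K₀ lam * (E s)⁻¹) i j)
      = (fun s => (D s lam * K₀ lam * (D s (-lam))⁻¹) i j) := rfl
  have := h2 i j
  rw [halg] at this
  exact this
end
end

section
/- Let V₀, V : ℝ × ℂ → M₂(ℂ), and let D : ℝ × ℂ → M₂(ℂ) be differentiable in t with D(t,λ) invertible for all (t,λ) and ∂_t D(t,λ) = V(t,λ)·D(t,λ) − D(t,λ)·V₀(t,λ) for all t ∈ ℝ and λ ∈ ℂ. Let K₀ : ℂ → M₂(ℂ) satisfy V₀(t,λ)·K₀(λ) + K₀(λ)·V₀(−t,−λ) = 0 for all t and λ. Then the function K(t,λ) := D(t,λ)·K₀(λ)·D(−t,−λ)⁻¹ satisfies ∂_t K(t,λ) = V(t,λ)·K(t,λ) + K(t,λ)·V(−t,−λ) for all t ∈ ℝ and λ ∈ ℂ. -/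
open Matrix

noncomputable section

attribute [local instance] Matrix.linftyOpNormedRing Matrix.linftyOpNormedAlgebra

private abbrev M2 := Matrix (Fin 2) (Fin 2) ℂ

instance : CompleteSpace M2 :=
  FiniteDimensional.complete ℝ M2

private def entryCLM (i j : Fin 2) : M2 →L[ℝ] ℂ :=
  LinearMap.mkContinuous
    { toFun := fun A => A i j
      map_add' := fun _ _ => rfl
      map_smul' := fun _ _ => rfl }
    1 (fun A => by
      rw [one_mul]
      have h1 : ‖A i j‖₊ ≤ ‖A‖₊ := by
        rw [Matrix.linfty_opNNNorm_def]
        exact le_trans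
          (Finset.single_le_sum (f := fun k => ‖A i k‖₊) (fun _ _ => zero_le')
            (Finset.mem_univ j))
          (Finset.le_sup (f := fun i => ∑ j, ‖A i j‖₊) (Finset.mem_univ i))
      exact_mod_cast h1)

private lemma matrix_key (A : M2) :
    A = ∑ i : Fin 2, ∑ j : Fin 2, A i j • Matrix.single i j (1 : ℂ) := by
  ext k l
  fin_cases k <;> fin_cases l <;>
    simp [Matrix.sum_apply, Matrix.single_apply, Matrix.of_apply, Finset.sum_ite_eq', mul_ite]

private lemma hasDerivAt_of_entries {f : ℝ → M2} {f' : M2} {t : ℝ}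
    (h : ∀ i j, HasDerivAt (fun s => f s i j) (f' i j) t) :
    HasDerivAt f f' t := by
  have h2 : HasDerivAt
      (fun s => ∑ i : Fin 2, ∑ j : Fin 2, f s i j • Matrix.single i j (1 : ℂ))
      (∑ i : Fin 2, ∑ j : Fin 2, f' i j • Matrix.single i j (1 : ℂ)) t := by
    apply HasDerivAt.fun_sum; intro i _
    apply HasDerivAt.fun_sum; intro j _
    exact (h i j).smul_const _
  rw [matrix_key f']
  convert h2 using 1
  funext s
  exact matrix_key (f s)

private lemma entry_of_hasDerivAt {f : ℝ → M2} {f' : M2} {t : ℝ}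
    (h : HasDerivAt f f' t) (i j : Fin 2) :
    HasDerivAt (fun s => f s i j) (f' i j) t :=
  (entryCLM i j).hasFDerivAt.comp_hasDerivAt t h

/-- Dressing the boundary in the odd-order (time-reversal) case: if the Darboux matrix
`D` satisfies `∂ₜD(t,λ) = V(t,λ)D(t,λ) − D(t,λ)V₀(t,λ)` with each `D(t,λ)` invertible,
and the seed boundary matrix `K₀` satisfies `V₀(t,λ)K₀(λ) + K₀(λ)V₀(−t,−λ) = 0`, then
the dressed boundary matrix `K(t,λ) := D(t,λ)K₀(λ)D(−t,−λ)⁻¹` satisfies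
`∂ₜK(t,λ) = V(t,λ)K(t,λ) + K(t,λ)V(−t,−λ)`. -/
theorem dressed_boundary_odd
    (V₀ V D : ℝ → ℂ → Matrix (Fin 2) (Fin 2) ℂ)
    (hDinv : ∀ (t : ℝ) (lam : ℂ), IsUnit (D t lam))
    (hD : ∀ (t : ℝ) (lam : ℂ) (i j : Fin 2),
      HasDerivAt (fun s => D s lam i j)
        ((V t lam * D t lam - D t lam * V₀ t lam) i j) t)
    (K₀ : ℂ → Matrix (Fin 2) (Fin 2) ℂ)
    (hK₀ : ∀ (t : ℝ) (lam : ℂ), V₀ t lam * K₀ lam + K₀ lam * V₀ (-t) (-lam) = 0) :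
    ∀ (t : ℝ) (lam : ℂ) (i j : Fin 2),
      HasDerivAt (fun s => (D s lam * K₀ lam * (D (-s) (-lam))⁻¹) i j)
        ((V t lam * (D t lam * K₀ lam * (D (-t) (-lam))⁻¹)
          + (D t lam * K₀ lam * (D (-t) (-lam))⁻¹) * V (-t) (-lam)) i j) t := by
  intro t lam i j
  -- matrix-valued derivative of D
  have hDm : ∀ (t : ℝ) (lam : ℂ), HasDerivAt (fun s => D s lam)
      (V t lam * D t lam - D t lam * V₀ t lam) t :=
    fun t lam => hasDerivAt_of_entries (fun i j => hD t lam i j)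
  set A := D t lam with hA
  set B := D (-t) (-lam) with hB
  set Vm := V (-t) (-lam) with hVm
  set V₀m := V₀ (-t) (-lam) with hV₀m
  -- derivative of s ↦ D (-s) (-lam)
  have hDneg : HasDerivAt (fun s => D (-s) (-lam)) (-(Vm * B - B * V₀m)) t := by
    have h1 : HasDerivAt (fun s : ℝ => -s) (-1 : ℝ) t := (hasDerivAt_id t).neg
    have := (hDm (-t) (-lam)).scomp t h1
    simp [Function.comp_def] at this; rw [neg_sub]; exact this
  -- derivative of the inverse
  set u : M2ˣ := (hDinv (-t) (-lam)).unit with hu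
  have hucoe : (u : M2) = B := rfl
  have hN : HasDerivAt (fun s => Ring.inverse (D (-s) (-lam)))
      (B⁻¹ * (Vm * B - B * V₀m) * B⁻¹) t := by
    have hf : HasFDerivAt Ring.inverse
        (-ContinuousLinearMap.mulLeftRight ℝ M2 ↑u⁻¹ ↑u⁻¹) (B : M2) := by
      have := hasFDerivAt_ringInverse (𝕜 := ℝ) u
      rwa [hucoe] at this
    have h2 := hf.comp_hasDerivAt t hDneg
    have h3 : HasDerivAt (fun s => Ring.inverse (D (-s) (-lam)))
        (-(B⁻¹ * (B * V₀m - Vm * B) * B⁻¹)) t := by simp [Function.comp_def] at h2; exact h2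
    rwa [show -(B⁻¹ * (B * V₀m - Vm * B) * B⁻¹)
        = B⁻¹ * (Vm * B - B * V₀m) * B⁻¹ by noncomm_ring] at h3
  -- product rule
  have hK : HasDerivAt (fun s => D s lam * K₀ lam * Ring.inverse (D (-s) (-lam)))
      ((V t lam * A - A * V₀ t lam) * K₀ lam * Ring.inverse B
        + A * K₀ lam * (B⁻¹ * (Vm * B - B * V₀m) * B⁻¹)) t :=
    ((hDm t lam).mul_const (K₀ lam)).mul hN
  -- identify Ring.inverse with ⁻¹
  have hinv : (Ring.inverse B : M2) = B⁻¹ := (Matrix.nonsing_inv_eq_ringInverse B).symm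
  -- the inverse relations
  have hdet : IsUnit B.det := (Matrix.isUnit_iff_isUnit_det B).mp (hDinv (-t) (-lam))
  have hBN : B * B⁻¹ = 1 := Matrix.mul_nonsing_inv B hdet
  have hNB : B⁻¹ * B = 1 := Matrix.nonsing_inv_mul B hdet
  -- the seed boundary relation
  have hseed : V₀ t lam * K₀ lam = -(K₀ lam * V₀m) :=
    eq_neg_of_add_eq_zero_left (hK₀ t lam)
  -- algebraic identification of the derivative
  have e1 : B⁻¹ * (Vm * B - B * V₀m) * B⁻¹ = B⁻¹ * Vm - V₀m * B⁻¹ := by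
    simp only [Matrix.mul_sub, Matrix.sub_mul, ← Matrix.mul_assoc]
    rw [Matrix.mul_assoc (B⁻¹ * Vm) B B⁻¹, hBN, mul_one, hNB, one_mul]
  have key : (V t lam * A - A * V₀ t lam) * K₀ lam * B⁻¹
      + A * K₀ lam * (B⁻¹ * (Vm * B - B * V₀m) * B⁻¹)
      = V t lam * (A * K₀ lam * B⁻¹) + (A * K₀ lam * B⁻¹) * Vm := by
    rw [e1]
    rw [show (V t lam * A - A * V₀ t lam) * K₀ lam * B⁻¹
        = V t lam * A * K₀ lam * B⁻¹ - A * (V₀ t lam * K₀ lam) * B⁻¹ by noncomm_ring]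
    rw [hseed]
    rw [show A * K₀ lam * (B⁻¹ * Vm - V₀m * B⁻¹)
        = A * K₀ lam * B⁻¹ * Vm - A * (K₀ lam * V₀m) * B⁻¹ by noncomm_ring]
    noncomm_ring
  simp only [← Matrix.nonsing_inv_eq_ringInverse] at hK
  rw [key] at hK
  exact entry_of_hasDerivAt hK i j
end
end
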